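/- arXiv:0807.0204 — 2 statements merged into one kernel-verified Lean document; each statement's English description precedes it below -/
import Mathlib

section
/- Let H be an n×n complex matrix that is lower bidiagonal, i.e., H_{ij} = 0 unless i = j or i = j + 1, and let ρ ≥ 0 be a real number. Then det(I_n + ρ·H·Hᴴ) ≥ ∏_{i=1}^{n−1} (1 + ρ·|H_{i+1,i}|²). In particular, the mutual information log det(I_n + ρ·H·Hᴴ) is lower bounded by that of the channel H_l obtained by retaining only the first subdiagonal of H. -/
/-!
Write `a k` and `b k` for the diagonal and subdiagonal entries of `H`, and `D k` for the leading
`k × k` principal minor of `M = 1 + ρ H Hᴴ`. Since `M` is tridiagonal, these satisfy the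
continuant recurrence
`D k = (1 + ρ (|b k|² + |a k|²)) D (k-1) - ρ² |b k|² |a (k-1)|² D (k-2)`.
Hence `E k = D k - ρ |a k|² D (k-1)`, which is `D k` computed with `a k` replaced by `0`,
satisfies `E k = D (k-1) + ρ |b k|² E (k-1)`. As `M` is positive semidefinite, `0 ≤ D (k-1)`,
so `E k ≤ D k`, and induction gives `∏ i < k, (1 + ρ |b i|²) ≤ E k ≤ D k`.
-/

open Matrix ComplexOrder

abbrev Matrix.dropLast {α : Type*} {n : ℕ} (M : Matrix (Fin (n + 1)) (Fin (n + 1)) α) :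
    Matrix (Fin n) (Fin n) α :=
  M.submatrix Fin.castSucc Fin.castSucc

namespace Matrix

variable {R : Type*} [CommRing R]

theorem det_eq_mul_det_dropLast_of_castSucc_last_eq_zero {n : ℕ}
    (M : Matrix (Fin (n + 1)) (Fin (n + 1)) R)
    (hcol : ∀ i : Fin n, M i.castSucc (Fin.last n) = 0) :
    M.det = M (Fin.last n) (Fin.last n) * M.dropLast.det := by
  rw [det_succ_column M (Fin.last n), Fin.sum_univ_castSucc,
    Finset.sum_eq_zero fun i _ => by rw [hcol i, mul_zero, zero_mul], zero_add, Fin.succAbove_last]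
  simp

theorem det_eq_of_tridiagonal_last {n : ℕ} (M : Matrix (Fin (n + 2)) (Fin (n + 2)) R)
    (hrow : ∀ j : Fin n, M (Fin.last (n + 1)) j.castSucc.castSucc = 0)
    (hcol : ∀ i : Fin n, M i.castSucc.castSucc (Fin.last (n + 1)) = 0) :
    M.det = M (Fin.last (n + 1)) (Fin.last (n + 1)) * M.dropLast.det
      - M (Fin.last (n + 1)) (Fin.last n).castSucc * M (Fin.last n).castSucc (Fin.last (n + 1))
        * M.dropLast.dropLast.det := by
  have hsucc : (Fin.last n).castSucc.succAbove (Fin.last n) = Fin.last (n + 1) := by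
    rw [Fin.succAbove_castSucc_self, Fin.succ_last]
  -- the minor of the last row's subdiagonal entry has one nonzero entry in its last column
  have hminor := det_eq_mul_det_dropLast_of_castSucc_last_eq_zero
    (M.submatrix Fin.castSucc (Fin.last n).castSucc.succAbove) fun i => by
      simpa only [submatrix_apply, hsucc] using hcol i
  have hdrop : (M.submatrix Fin.castSucc (Fin.last n).castSucc.succAbove).dropLast
      = M.dropLast.dropLast := by
    ext i j
    simp only [submatrix_apply, Fin.succAbove_castSucc_of_lt _ _ (Fin.castSucc_lt_last j)]
  rw [det_succ_row M (Fin.last (n + 1)), Fin.sum_univ_castSucc, Fin.sum_univ_castSucc,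
    Finset.sum_eq_zero fun j _ => by rw [hrow j, mul_zero, zero_mul], zero_add,
    Fin.succAbove_last, hminor, hdrop, submatrix_apply, hsucc]
  simp only [Fin.val_last, Fin.val_castSucc, pow_add, pow_one, mul_neg, mul_one, neg_mul,
    ← mul_pow, neg_neg, one_pow, one_mul, submatrix_submatrix]
  ring

end Matrix

def IsLowerBidiagonal {α : Type*} [Zero α] {n : ℕ} (H : Matrix (Fin n) (Fin n) α) : Prop :=
  ∀ i j : Fin n, (i : ℕ) ≠ j → (i : ℕ) ≠ j + 1 → H i j = 0

namespace IsLowerBidiagonal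

variable {α : Type*} [Zero α] {n : ℕ} {H : Matrix (Fin (n + 1)) (Fin (n + 1)) α}

theorem dropLast (hH : IsLowerBidiagonal H) : IsLowerBidiagonal H.dropLast :=
  fun i j hij hij' => hH i.castSucc j.castSucc hij hij'

theorem castSucc_last (hH : IsLowerBidiagonal H) (i : Fin n) : H i.castSucc (Fin.last n) = 0 :=
  hH _ _ (by simp; omega) (by simp; omega)

end IsLowerBidiagonal

def regGram {m n : Type*} [Fintype n] [DecidableEq m] (ρ : ℝ) (H : Matrix m n ℂ) :
    Matrix m m ℂ :=
  1 + (ρ : ℂ) • (H * Hᴴ)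

section RegGram

variable {m n : Type*} [Fintype n] [DecidableEq m]

theorem regGram_isHermitian (ρ : ℝ) (H : Matrix m n ℂ) : (regGram ρ H).IsHermitian :=
  isHermitian_one.add ((isHermitian_mul_conjTranspose_self H).smul (Complex.conj_ofReal ρ))

theorem re_det_regGram_nonneg [Fintype m] {ρ : ℝ} (hρ : 0 ≤ ρ) (H : Matrix m n ℂ) :
    0 ≤ (regGram ρ H).det.re :=
  (Complex.nonneg_iff.1 (PosSemidef.one.add ((posSemidef_self_mul_conjTranspose H).smul
    (Complex.zero_le_real.2 hρ))).det_nonneg).1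

end RegGram

theorem regGram_dropLast {n : ℕ} (ρ : ℝ) {H : Matrix (Fin (n + 1)) (Fin (n + 1)) ℂ}
    (hcol : ∀ i : Fin n, H i.castSucc (Fin.last n) = 0) :
    regGram ρ H.dropLast = (regGram ρ H).dropLast := by
  ext i j
  simp [regGram, mul_apply, Fin.sum_univ_castSucc, hcol, one_apply]

namespace IsLowerBidiagonal

variable {m : ℕ} {H : Matrix (Fin (m + 2)) (Fin (m + 2)) ℂ}

theorem mul_conjTranspose_last_apply (hH : IsLowerBidiagonal H) (j : Fin (m + 2)) :
    (H * Hᴴ) (Fin.last (m + 1)) j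
      = H (Fin.last (m + 1)) (Fin.last m).castSucc * star (H j (Fin.last m).castSucc)
        + H (Fin.last (m + 1)) (Fin.last (m + 1)) * star (H j (Fin.last (m + 1))) := by
  rw [mul_apply, Fintype.sum_eq_add (Fin.last m).castSucc (Fin.last (m + 1))
    (Fin.castSucc_lt_last _).ne fun k hk => ?_]
  · simp only [conjTranspose_apply]
  · simp only [ne_eq, Fin.ext_iff, Fin.val_last, Fin.val_castSucc] at hk
    rw [hH _ k (by simp; omega) (by simp; omega), zero_mul]

theorem regGram_last_castSucc_castSucc (hH : IsLowerBidiagonal H) (ρ : ℝ) (j : Fin m) :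
    regGram ρ H (Fin.last (m + 1)) j.castSucc.castSucc = 0 := by
  have hj := j.isLt
  rw [regGram, Matrix.add_apply, Matrix.smul_apply, hH.mul_conjTranspose_last_apply,
    hH j.castSucc.castSucc _ (by simp; omega) (by simp; omega),
    hH j.castSucc.castSucc _ (by simp; omega) (by simp; omega),
    one_apply_ne (Fin.castSucc_lt_last j.castSucc).ne']
  simp

theorem regGram_last_last (hH : IsLowerBidiagonal H) (ρ : ℝ) :
    regGram ρ H (Fin.last (m + 1)) (Fin.last (m + 1))
      = ((1 + ρ * (‖H (Fin.last (m + 1)) (Fin.last m).castSucc‖ ^ 2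
          + ‖H (Fin.last (m + 1)) (Fin.last (m + 1))‖ ^ 2) : ℝ) : ℂ) := by
  rw [regGram, Matrix.add_apply, Matrix.smul_apply, one_apply_eq, hH.mul_conjTranspose_last_apply,
    Complex.star_def, Complex.mul_conj', Complex.mul_conj', smul_eq_mul]
  push_cast
  ring

theorem regGram_last_castSucc_mul_castSucc_last (hH : IsLowerBidiagonal H) (ρ : ℝ) :
    regGram ρ H (Fin.last (m + 1)) (Fin.last m).castSucc
        * regGram ρ H (Fin.last m).castSucc (Fin.last (m + 1))
      = ((ρ ^ 2 * ‖H (Fin.last (m + 1)) (Fin.last m).castSucc‖ ^ 2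
          * ‖H (Fin.last m).castSucc (Fin.last m).castSucc‖ ^ 2 : ℝ) : ℂ) := by
  rw [← (regGram_isHermitian ρ H).apply (Fin.last m).castSucc, Complex.star_def,
    Complex.mul_conj', regGram, Matrix.add_apply, Matrix.smul_apply,
    hH.mul_conjTranspose_last_apply, hH (Fin.last m).castSucc (Fin.last (m + 1))
      (by simp) (by simp only [Fin.val_castSucc, Fin.val_last]; omega),
    one_apply_ne (Fin.castSucc_lt_last _).ne', star_zero, mul_zero, add_zero, zero_add,
    smul_eq_mul, norm_mul, norm_mul, Complex.norm_real, Real.norm_eq_abs, norm_star,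
    ← Complex.ofReal_pow, mul_pow, mul_pow, sq_abs]
  push_cast
  ring

theorem re_det_regGram_succ_succ (hH : IsLowerBidiagonal H) (ρ : ℝ) :
    (regGram ρ H).det.re
      = (1 + ρ * (‖H (Fin.last (m + 1)) (Fin.last m).castSucc‖ ^ 2
          + ‖H (Fin.last (m + 1)) (Fin.last (m + 1))‖ ^ 2)) * (regGram ρ H.dropLast).det.re
        - ρ ^ 2 * ‖H (Fin.last (m + 1)) (Fin.last m).castSucc‖ ^ 2
          * ‖H.dropLast (Fin.last m) (Fin.last m)‖ ^ 2
          * (regGram ρ H.dropLast.dropLast).det.re := by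
  have hcol (i : Fin m) : regGram ρ H i.castSucc.castSucc (Fin.last (m + 1)) = 0 := by
    rw [← (regGram_isHermitian ρ H).apply, hH.regGram_last_castSucc_castSucc, star_zero]
  rw [det_eq_of_tridiagonal_last _ (hH.regGram_last_castSucc_castSucc ρ) hcol,
    hH.regGram_last_last, hH.regGram_last_castSucc_mul_castSucc_last,
    ← regGram_dropLast ρ hH.castSucc_last, ← regGram_dropLast ρ hH.dropLast.castSucc_last,
    Complex.sub_re, Complex.re_ofReal_mul, Complex.re_ofReal_mul]
  rfl

end IsLowerBidiagonal

noncomputable def subdiagProd (ρ : ℝ) {n : ℕ} (H : Matrix (Fin (n + 1)) (Fin (n + 1)) ℂ) :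
    ℝ :=
  ∏ i : Fin n, (1 + ρ * ‖H i.succ i.castSucc‖ ^ 2)

theorem subdiagProd_succ (ρ : ℝ) {n : ℕ} (H : Matrix (Fin (n + 2)) (Fin (n + 2)) ℂ) :
    subdiagProd ρ H = subdiagProd ρ H.dropLast
      * (1 + ρ * ‖H (Fin.last (n + 1)) (Fin.last n).castSucc‖ ^ 2) :=
  Fin.prod_univ_castSucc _

theorem subdiagProd_le_re_det_regGram_sub {ρ : ℝ} (hρ : 0 ≤ ρ) :
    ∀ {n : ℕ} (H : Matrix (Fin (n + 1)) (Fin (n + 1)) ℂ), IsLowerBidiagonal H →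
      subdiagProd ρ H ≤ (regGram ρ H).det.re
        - ρ * ‖H (Fin.last n) (Fin.last n)‖ ^ 2 * (regGram ρ H.dropLast).det.re
  | 0, H, _ => by
    simp [subdiagProd, regGram, mul_apply, Complex.mul_conj', ← Complex.ofReal_pow]
  | n + 1, H, hH => by
    have ih := subdiagProd_le_re_det_regGram_sub hρ H.dropLast hH.dropLast
    have hle : (regGram ρ H.dropLast).det.re
          - ρ * ‖H.dropLast (Fin.last n) (Fin.last n)‖ ^ 2
            * (regGram ρ H.dropLast.dropLast).det.re
        ≤ (regGram ρ H.dropLast).det.re :=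
      sub_le_self _ (mul_nonneg (by positivity) (re_det_regGram_nonneg hρ _))
    have hb : 0 ≤ ρ * ‖H (Fin.last (n + 1)) (Fin.last n).castSucc‖ ^ 2 := by positivity
    rw [subdiagProd_succ, hH.re_det_regGram_succ_succ]
    linarith [mul_le_mul_of_nonneg_left ih hb, ih.trans hle]

/-- For a lower bidiagonal complex matrix `H` (nonzero entries only on the main diagonal
and first subdiagonal) and `ρ ≥ 0`, `det(I + ρ·H·Hᴴ) ≥ ∏_{i=1}^{n−1} (1 + ρ|H_{i+1,i}|²)`:
the mutual information of `H` is lower bounded by that of its subdiagonal part. -/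
theorem det_one_add_smul_mul_conjTranspose_ge_prod_subdiag
    (n : ℕ) (H : Matrix (Fin n) (Fin n) ℂ)
    (hH : ∀ i j : Fin n, (i : ℕ) ≠ (j : ℕ) → (i : ℕ) ≠ (j : ℕ) + 1 → H i j = 0)
    (ρ : ℝ) (hρ : 0 ≤ ρ) :
    ∏ i : Fin (n - 1),
        (1 + ρ * ‖H ⟨(i : ℕ) + 1, by have := i.isLt; omega⟩
            ⟨(i : ℕ), by have := i.isLt; omega⟩‖ ^ 2)
      ≤ ((1 : Matrix (Fin n) (Fin n) ℂ) + (ρ : ℂ) • (H * Hᴴ)).det.re := by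
  cases n with
  | zero => simp
  | succ n =>
    calc subdiagProd ρ H
        ≤ (regGram ρ H).det.re
          - ρ * ‖H (Fin.last n) (Fin.last n)‖ ^ 2 * (regGram ρ H.dropLast).det.re :=
          subdiagProd_le_re_det_regGram_sub hρ H hH
      _ ≤ (regGram ρ H).det.re :=
          sub_le_self _ (mul_nonneg (by positivity) (re_det_regGram_nonneg hρ _))
end

section
/- Let N ≥ 1 be an integer and let X₁, …, X_N be i.i.d. positive random variables such that Pr[X₁ ≤ ε] > 0 for every ε > 0 and lim_{ε→0⁺} log Pr[X₁ ≤ ε]/log ε = 1. Then for every real r with 0 < r < N, lim_{ρ→∞} log Pr[ Σ_{i=1}^N log(1 + ρ·Xᵢ) ≤ r·log ρ ] / log ρ = −(N − r). -/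
open MeasureTheory ProbabilityTheory Filter

/-!
Write `F` for the common distribution function, so that `F x = x ^ (1 + o(1))` as `x → 0⁺`.
Lower bound: for `a < r / N` the outage event contains the box where every `Xᵢ ≤ ρ ^ (a - 1)`,
of probability `F (ρ ^ (a - 1)) ^ N = ρ ^ (N (a - 1) + o(1))`.
Upper bound: on the outage event the normalised rates `log (1 + ρ Xᵢ) / (r log ρ)` sum to at
most `1`; rounding them up to the grid of mesh `1 / M` covers the event by boundedly many boxes
`{∀ i, Xᵢ ≤ ρ ^ ((kᵢ + 1) r / M - 1)}` with `∑ kᵢ ≤ M`, each of probability at most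
`ρ ^ (r - N + O(N r / M))`. Letting `a → r / N` and `M → ∞` gives the exponent `r - N`.
-/

open Real Topology

section Exponent

lemma tendsto_log_comp_rpow_div_log {F : ℝ → ℝ}
    (hF : Tendsto (fun x => log (F x) / log x) (𝓝[>] 0) (𝓝 1)) {β : ℝ} (hβ : β < 0) :
    Tendsto (fun ρ => log (F (ρ ^ β)) / log ρ) atTop (𝓝 β) := by
  have hpow : Tendsto (fun ρ : ℝ => ρ ^ β) atTop (𝓝[>] 0) := by
    refine tendsto_nhdsWithin_iff.2 ⟨?_, ?_⟩
    · simpa using tendsto_rpow_neg_atTop (neg_pos.2 hβ)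
    · filter_upwards [eventually_gt_atTop 0] with ρ hρ using rpow_pos_of_pos hρ β
  have hlim := (hF.comp hpow).const_mul β
  rw [mul_one] at hlim
  refine hlim.congr' ?_
  filter_upwards [eventually_gt_atTop 1] with ρ hρ
  simp only [Function.comp_apply, log_rpow (zero_lt_one.trans hρ)]
  field_simp [(log_pos hρ).ne', hβ.ne]

lemma eventually_le_rpow_add {F : ℝ → ℝ}
    (hF : Tendsto (fun x => log (F x) / log x) (𝓝[>] 0) (𝓝 1))
    (hF0 : ∀ x, 0 < x → 0 < F x) (hF1 : ∀ x, F x ≤ 1) (β : ℝ) {δ : ℝ} (hδ : 0 < δ) :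
    ∀ᶠ ρ in atTop, F (ρ ^ β) ≤ ρ ^ (β + δ) := by
  rcases lt_or_ge β 0 with hβ | hβ
  · filter_upwards [(tendsto_log_comp_rpow_div_log hF hβ).eventually
      (eventually_lt_nhds (lt_add_of_pos_right β hδ)), eventually_gt_atTop 1] with ρ hlt hρ
    have hρ0 : 0 < ρ := zero_lt_one.trans hρ
    rw [div_lt_iff₀ (log_pos hρ), ← log_rpow hρ0,
      log_lt_log_iff (hF0 _ (rpow_pos_of_pos hρ0 β)) (rpow_pos_of_pos hρ0 _)] at hlt
    exact hlt.le
  · filter_upwards [eventually_ge_atTop 1] with ρ hρ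
    exact (hF1 _).trans (one_le_rpow hρ (by linarith))

lemma eventually_lt_log_div_log_of_le {g P : ℝ → ℝ} {L c : ℝ}
    (hg : Tendsto (fun ρ => log (g ρ) / log ρ) atTop (𝓝 L)) (hc : c < L)
    (hgP : ∀ᶠ ρ in atTop, 0 < g ρ ∧ g ρ ≤ P ρ) :
    ∀ᶠ ρ in atTop, c < log (P ρ) / log ρ := by
  filter_upwards [hg.eventually (eventually_gt_nhds hc), hgP, eventually_gt_atTop 1]
    with ρ hlt ⟨hg0, hgP⟩ hρ
  exact hlt.trans_le (div_le_div_of_nonneg_right (log_le_log hg0 hgP) (log_pos hρ).le)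

lemma eventually_log_div_log_lt_of_le_mul_rpow {P : ℝ → ℝ} {C e c : ℝ} (hc : e < c)
    (hP : ∀ᶠ ρ in atTop, 0 < P ρ ∧ P ρ ≤ C * ρ ^ e) :
    ∀ᶠ ρ in atTop, log (P ρ) / log ρ < c := by
  have hlim : Tendsto (fun ρ => log C / log ρ + e) atTop (𝓝 e) := by
    simpa using (tendsto_const_nhds.div_atTop tendsto_log_atTop).add_const e
  filter_upwards [hlim.eventually (eventually_lt_nhds hc), hP, eventually_gt_atTop 1]
    with ρ hlt ⟨hP0, hPC⟩ hρ
  have hρe : 0 < ρ ^ e := rpow_pos_of_pos (zero_lt_one.trans hρ) e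
  have hC : 0 < C := pos_of_mul_pos_left (hP0.trans_le hPC) hρe.le
  calc log (P ρ) / log ρ ≤ log (C * ρ ^ e) / log ρ :=
        div_le_div_of_nonneg_right (log_le_log hP0 hPC) (log_pos hρ).le
    _ = log C / log ρ + e := by
        rw [log_mul hC.ne' hρe.ne', log_rpow (zero_lt_one.trans hρ)]
        field_simp [(log_pos hρ).ne']
    _ < c := hlt

lemma eventually_one_add_rpow_le_rpow {a s : ℝ} (hs : 0 < s) (has : a < s) :
    ∀ᶠ ρ : ℝ in atTop, 1 + ρ ^ a ≤ ρ ^ s := by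
  filter_upwards [(tendsto_rpow_atTop hs).eventually_ge_atTop (2 : ℝ),
    (tendsto_rpow_atTop (sub_pos.2 has)).eventually_ge_atTop (2 : ℝ), eventually_gt_atTop 0]
    with ρ hs2 hsa2 hρ
  have hsplit : ρ ^ s = ρ ^ (s - a) * ρ ^ a := by rw [← rpow_add hρ, sub_add_cancel]
  nlinarith [rpow_pos_of_pos hρ a]

lemma log_one_add_mul_le_mul_log_iff {ρ x t : ℝ} (hρ : 0 < ρ) (hx : 0 ≤ x) :
    log (1 + ρ * x) ≤ t * log ρ ↔ 1 + ρ * x ≤ ρ ^ t := by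
  rw [← log_rpow hρ, log_le_log_iff (by positivity) (rpow_pos_of_pos hρ t)]

end Exponent

open Classical in
noncomputable def discreteSimplex (ι : Type*) [Fintype ι] (M : ℕ) : Finset (ι → Fin (M + 1)) :=
  Finset.univ.filter fun k => ∑ i, (k i : ℕ) ≤ M

section Grid

variable {ι : Type*} [Fintype ι]

@[simp]
lemma mem_discreteSimplex {M : ℕ} {k : ι → Fin (M + 1)} :
    k ∈ discreteSimplex ι M ↔ ∑ i, (k i : ℕ) ≤ M := by
  simp [discreteSimplex]

lemma exists_mem_discreteSimplex_lt {M : ℕ} (hM : 0 < M) {y : ι → ℝ}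
    (hy : ∀ i, 0 ≤ y i) (hsum : ∑ i, y i ≤ 1) :
    ∃ k ∈ discreteSimplex ι M, ∀ i, y i < ((k i : ℕ) + 1) / M := by
  have hMy : ∀ i, (M : ℝ) * y i ≤ M := fun i =>
    mul_le_of_le_one_right M.cast_nonneg
      ((Finset.single_le_sum (fun j _ => hy j) (Finset.mem_univ i)).trans hsum)
  refine ⟨fun i => ⟨⌊M * y i⌋₊, Nat.lt_succ_of_le (Nat.floor_le_of_le (hMy i))⟩, ?_, fun i => ?_⟩
  · have hfloor : (∑ i, (⌊M * y i⌋₊ : ℝ)) ≤ M :=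
      calc (∑ i, (⌊M * y i⌋₊ : ℝ)) ≤ ∑ i, M * y i :=
            Finset.sum_le_sum fun i _ => Nat.floor_le (mul_nonneg M.cast_nonneg (hy i))
        _ = M * ∑ i, y i := (Finset.mul_sum ..).symm
        _ ≤ M := mul_le_of_le_one_right M.cast_nonneg hsum
    exact mem_discreteSimplex.2 (by exact_mod_cast hfloor)
  · rw [lt_div_iff₀ (by exact_mod_cast hM), mul_comm]
    exact Nat.lt_floor_add_one _

lemma exists_mem_discreteSimplex_le_rpow {M : ℕ} (hM : 0 < M) {ρ r : ℝ}
    (hρ : 1 < ρ) (hr : 0 < r) {x : ι → ℝ} (hx : ∀ i, 0 ≤ x i)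
    (hsum : ∑ i, log (1 + ρ * x i) ≤ r * log ρ) :
    ∃ k ∈ discreteSimplex ι M, ∀ i, x i ≤ ρ ^ (((k i : ℕ) + 1) * r / M - 1) := by
  have hρ0 : 0 < ρ := zero_lt_one.trans hρ
  have hT : 0 < r * log ρ := mul_pos hr (log_pos hρ)
  obtain ⟨k, hk, hy⟩ := exists_mem_discreteSimplex_lt hM
    (y := fun i => log (1 + ρ * x i) / (r * log ρ))
    (fun i => div_nonneg (log_nonneg (by nlinarith [hx i])) hT.le)
    (by rw [← Finset.sum_div, div_le_one hT]; exact hsum)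
  refine ⟨k, hk, fun i => ?_⟩
  have hlog : log (1 + ρ * x i) ≤ (((k i : ℕ) + 1) * r / M) * log ρ := by
    rw [show (((k i : ℕ) : ℝ) + 1) * r / M * log ρ = (((k i : ℕ) : ℝ) + 1) / M * (r * log ρ) by
      ring]
    exact ((div_lt_iff₀ hT).1 (hy i)).le
  rw [log_one_add_mul_le_mul_log_iff hρ0 (hx i)] at hlog
  rw [rpow_sub_one hρ0.ne', le_div_iff₀ hρ0, mul_comm]
  linarith

/-- The slack `δ = r / M` allowed by the distribution function is of the order of the grid
mesh, so it only doubles the error term `N r / M`. -/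
lemma eventually_sum_prod_le_card_mul_rpow {F : ℝ → ℝ}
    (hF : Tendsto (fun x => log (F x) / log x) (𝓝[>] 0) (𝓝 1))
    (hF0 : ∀ x, 0 < x → 0 < F x) (hF1 : ∀ x, F x ≤ 1) {M : ℕ} (hM : 0 < M) {r : ℝ}
    (hr : 0 < r) :
    ∀ᶠ ρ in atTop, ∑ k ∈ discreteSimplex ι M, ∏ i, F (ρ ^ (((k i : ℕ) + 1) * r / M - 1)) ≤
      (discreteSimplex ι M).card * ρ ^ (r - Fintype.card ι + 2 * Fintype.card ι * r / M) := by
  have hM' : (0 : ℝ) < M := by exact_mod_cast hM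
  have hgrid : ∀ᶠ ρ in atTop, ∀ j : Fin (M + 1),
      F (ρ ^ (((j : ℕ) + 1) * r / M - 1)) ≤ ρ ^ ((((j : ℕ) + 1) * r / M - 1) + r / M) :=
    eventually_all.2 fun j => eventually_le_rpow_add hF hF0 hF1 _ (div_pos hr hM')
  filter_upwards [hgrid, eventually_gt_atTop 0, eventually_ge_atTop 1] with ρ hgrid hρ hρ1
  rw [← nsmul_eq_mul]
  refine Finset.sum_le_card_nsmul _ _ _ fun k hk => ?_
  have hexp : ∑ i, ((((k i : ℕ) : ℝ) + 1) * r / M - 1 + r / M)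
      = (∑ i, ((k i : ℕ) : ℝ)) * (r / M) + Fintype.card ι * (2 * r / M - 1) := by
    rw [Finset.sum_congr rfl fun i _ =>
        show (((k i : ℕ) : ℝ) + 1) * r / M - 1 + r / M
          = ((k i : ℕ) : ℝ) * (r / M) + (2 * r / M - 1) by ring,
      Finset.sum_add_distrib, ← Finset.sum_mul, Finset.sum_const, Finset.card_univ,
      nsmul_eq_mul]
  have hk : (∑ i, ((k i : ℕ) : ℝ)) ≤ M := by exact_mod_cast mem_discreteSimplex.1 hk
  have hkr : (∑ i, ((k i : ℕ) : ℝ)) * (r / M) ≤ r :=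
    (mul_le_mul_of_nonneg_right hk
      (div_nonneg hr.le hM'.le)).trans_eq (mul_div_cancel₀ r hM'.ne')
  calc ∏ i, F (ρ ^ (((k i : ℕ) + 1) * r / M - 1))
      ≤ ∏ i, ρ ^ ((((k i : ℕ) + 1) * r / M - 1) + r / M) :=
        Finset.prod_le_prod (fun i _ => (hF0 _ (rpow_pos_of_pos hρ _)).le) fun i _ => hgrid (k i)
    _ = ρ ^ ∑ i, ((((k i : ℕ) : ℝ) + 1) * r / M - 1 + r / M) := (rpow_sum_of_pos hρ _ _).symm
    _ ≤ ρ ^ (r - Fintype.card ι + 2 * Fintype.card ι * r / M) := by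
        refine rpow_le_rpow_of_exponent_le hρ1 ?_
        rw [hexp]
        linarith [show (Fintype.card ι : ℝ) * (2 * r / M - 1)
          = 2 * Fintype.card ι * r / M - Fintype.card ι by ring]

end Grid

section Outage

variable {Ω ι : Type*} [MeasurableSpace Ω] {μ : Measure Ω} [Fintype ι]
  {X : ι → Ω → ℝ} {Y : Ω → ℝ}

def outageEvent (X : ι → Ω → ℝ) (r ρ : ℝ) : Set Ω :=
  {ω | ∑ i, log (1 + ρ * X i ω) ≤ r * log ρ}

lemma measureReal_iInter_le_eq_prod (hindep : iIndepFun X μ)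
    (hident : ∀ i, IdentDistrib (X i) Y μ μ) (c : ι → ℝ) :
    μ.real (⋂ i, {ω | X i ω ≤ c i}) = ∏ i, μ.real {ω | Y ω ≤ c i} := by
  have h := hindep.measure_inter_preimage_eq_mul Finset.univ
    (fun i _ => measurableSet_Iic (a := c i))
  simp only [Finset.mem_univ, Set.iInter_true] at h
  rw [measureReal_def, show (⋂ i, {ω | X i ω ≤ c i}) = ⋂ i, X i ⁻¹' Set.Iic (c i) from rfl, h,
    ENNReal.toReal_prod]
  exact Finset.prod_congr rfl fun i _ =>
    congrArg ENNReal.toReal ((hident i).measure_mem_eq measurableSet_Iic)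

variable [IsFiniteMeasure μ]

lemma pow_measureReal_le_measureReal_outageEvent [Nonempty ι] (hindep : iIndepFun X μ)
    (hident : ∀ i, IdentDistrib (X i) Y μ μ) (hX : ∀ i ω, 0 ≤ X i ω) {ρ r x : ℝ}
    (hρ : 0 < ρ) (hρx : 1 + ρ * x ≤ ρ ^ (r / Fintype.card ι)) :
    μ.real {ω | Y ω ≤ x} ^ Fintype.card ι ≤ μ.real (outageEvent X r ρ) := by
  rw [← Finset.card_univ, ← Finset.prod_const, ← measureReal_iInter_le_eq_prod hindep hident]
  refine measureReal_mono fun ω hω => ?_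
  simp only [Set.mem_iInter, Set.mem_ofPred_eq] at hω
  have hlog : ∀ i, log (1 + ρ * X i ω) ≤ r / Fintype.card ι * log ρ := fun i =>
    (log_one_add_mul_le_mul_log_iff hρ (hX i ω)).2 <| le_trans (by gcongr; exact hω i) hρx
  calc ∑ i, log (1 + ρ * X i ω) ≤ ∑ _i : ι, r / Fintype.card ι * log ρ :=
        Finset.sum_le_sum fun i _ => hlog i
    _ = r * log ρ := by
        rw [Finset.sum_const, Finset.card_univ, nsmul_eq_mul]
        field_simp [Fintype.card_ne_zero]

lemma measureReal_outageEvent_le_sum_prod (hindep : iIndepFun X μ)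
    (hident : ∀ i, IdentDistrib (X i) Y μ μ) (hX : ∀ i ω, 0 ≤ X i ω) {M : ℕ} (hM : 0 < M)
    {ρ r : ℝ} (hρ : 1 < ρ) (hr : 0 < r) :
    μ.real (outageEvent X r ρ) ≤
      ∑ k ∈ discreteSimplex ι M, ∏ i, μ.real {ω | Y ω ≤ ρ ^ (((k i : ℕ) + 1) * r / M - 1)} :=
  calc μ.real (outageEvent X r ρ)
      ≤ μ.real (⋃ k ∈ discreteSimplex ι M,
          ⋂ i, {ω | X i ω ≤ ρ ^ (((k i : ℕ) + 1) * r / M - 1)}) :=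
        measureReal_mono (fun ω hω => by
          simpa using exists_mem_discreteSimplex_le_rpow hM hρ hr (fun i => hX i ω) hω)
          (measure_ne_top _ _)
    _ ≤ _ := measureReal_biUnion_finset_le _ _
    _ = _ := Finset.sum_congr rfl fun k _ => measureReal_iInter_le_eq_prod hindep hident _

lemma eventually_pos_and_pow_le_measureReal_outageEvent [Nonempty ι] (hindep : iIndepFun X μ)
    (hident : ∀ i, IdentDistrib (X i) Y μ μ) (hX : ∀ i ω, 0 ≤ X i ω)
    (hY0 : ∀ x, 0 < x → 0 < μ.real {ω | Y ω ≤ x}) {r a : ℝ} (hr : 0 < r)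
    (ha : a < r / Fintype.card ι) :
    ∀ᶠ ρ in atTop, 0 < μ.real {ω | Y ω ≤ ρ ^ (a - 1)} ^ Fintype.card ι ∧
      μ.real {ω | Y ω ≤ ρ ^ (a - 1)} ^ Fintype.card ι ≤ μ.real (outageEvent X r ρ) := by
  have hn : (0 : ℝ) < Fintype.card ι := Nat.cast_pos.2 Fintype.card_pos
  filter_upwards [eventually_one_add_rpow_le_rpow (div_pos hr hn) ha, eventually_gt_atTop 0]
    with ρ hρa hρ
  refine ⟨pow_pos (hY0 _ (rpow_pos_of_pos hρ _)) _,
    pow_measureReal_le_measureReal_outageEvent hindep hident hX hρ ?_⟩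
  rwa [mul_comm, ← rpow_add_one hρ.ne', sub_add_cancel]

end Outage

section OutageExponent

variable {Ω ι : Type*} [MeasurableSpace Ω] {μ : Measure Ω} [Fintype ι] [Nonempty ι]
  {X : ι → Ω → ℝ} {Y : Ω → ℝ}

lemma eventually_lt_log_measureReal_outageEvent_div_log [IsFiniteMeasure μ]
    (hindep : iIndepFun X μ) (hident : ∀ i, IdentDistrib (X i) Y μ μ) (hX : ∀ i ω, 0 ≤ X i ω)
    (hY0 : ∀ x, 0 < x → 0 < μ.real {ω | Y ω ≤ x})
    (hY : Tendsto (fun x => log (μ.real {ω | Y ω ≤ x}) / log x) (𝓝[>] 0) (𝓝 1))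
    {r c : ℝ} (hr : 0 < r) (hrn : r < Fintype.card ι) (hc : c < r - Fintype.card ι) :
    ∀ᶠ ρ in atTop, c < log (μ.real (outageEvent X r ρ)) / log ρ := by
  set n : ℝ := (Fintype.card ι : ℝ)
  have hn : 0 < n := Nat.cast_pos.2 Fintype.card_pos
  obtain ⟨a, har, hca⟩ : ∃ a < r / n, c < n * (a - 1) := by
    refine ⟨1 + (c + r - n) / (2 * n), ?_, ?_⟩
    · rw [lt_div_iff₀ hn]
      field_simp
      linarith
    · field_simp
      linarith
  have hlim := (tendsto_log_comp_rpow_div_log hY (β := a - 1)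
    (by linarith [(div_lt_one hn).2 hrn])).const_mul n
  refine eventually_lt_log_div_log_of_le (L := n * (a - 1)) ?_ hca
    (eventually_pos_and_pow_le_measureReal_outageEvent hindep hident hX hY0 hr har)
  simpa [log_pow, mul_div_assoc] using hlim

lemma eventually_log_measureReal_outageEvent_div_log_lt [IsProbabilityMeasure μ]
    (hindep : iIndepFun X μ) (hident : ∀ i, IdentDistrib (X i) Y μ μ) (hX : ∀ i ω, 0 ≤ X i ω)
    (hY0 : ∀ x, 0 < x → 0 < μ.real {ω | Y ω ≤ x})
    (hY : Tendsto (fun x => log (μ.real {ω | Y ω ≤ x}) / log x) (𝓝[>] 0) (𝓝 1))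
    {r c : ℝ} (hr : 0 < r) (hc : r - Fintype.card ι < c) :
    ∀ᶠ ρ in atTop, log (μ.real (outageEvent X r ρ)) / log ρ < c := by
  set n : ℝ := (Fintype.card ι : ℝ)
  have hn : 0 < n := Nat.cast_pos.2 Fintype.card_pos
  obtain ⟨M, hM⟩ := exists_nat_gt (2 * n * r / (c - (r - n)))
  have hgap : 0 < c - (r - n) := by linarith
  have hM0 : 0 < M := by exact_mod_cast (div_pos (by positivity) hgap).trans hM
  refine eventually_log_div_log_lt_of_le_mul_rpow (C := (discreteSimplex ι M).card)
    (e := r - n + 2 * n * r / M) ?_ ?_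
  · rw [div_lt_iff₀ hgap] at hM
    rw [← lt_sub_iff_add_lt', div_lt_iff₀ (by exact_mod_cast hM0)]
    linarith
  filter_upwards [eventually_pos_and_pow_le_measureReal_outageEvent (a := 0) hindep hident hX
      hY0 hr (div_pos hr hn),
    eventually_sum_prod_le_card_mul_rpow (ι := ι) hY hY0 (fun x => measureReal_le_one) hM0 hr,
    eventually_gt_atTop 1] with ρ ⟨hpos, hle⟩ hsum hρ
  exact ⟨hpos.trans_le hle,
    (measureReal_outageEvent_le_sum_prod hindep hident hX hM0 hρ hr).trans hsum⟩

end OutageExponent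

theorem parallel_channel_outage_exponent_general
    {Ω : Type*} [MeasurableSpace Ω] (μ : Measure Ω) [IsProbabilityMeasure μ]
    (N : ℕ) (hN : 1 ≤ N) (X : Fin N → Ω → ℝ)
    (hpos : ∀ i ω, 0 < X i ω)
    (hindep : iIndepFun X μ)
    (hident : ∀ i, IdentDistrib (X i) (X ⟨0, hN⟩) μ μ)
    (hnonzero : ∀ ε : ℝ, 0 < ε → 0 < (μ {ω | X ⟨0, hN⟩ ω ≤ ε}).toReal)
    (hexp : Tendsto (fun ε : ℝ => Real.log ((μ {ω | X ⟨0, hN⟩ ω ≤ ε}).toReal) / Real.log ε)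
      (nhdsWithin 0 (Set.Ioi 0)) (nhds 1))
    (r : ℝ) (hr0 : 0 < r) (hrN : r < N) :
    Tendsto (fun ρ : ℝ =>
        Real.log ((μ {ω | ∑ i, Real.log (1 + ρ * X i ω) ≤ r * Real.log ρ}).toReal)
          / Real.log ρ)
      atTop (nhds (-((N : ℝ) - r))) := by
  have : Nonempty (Fin N) := ⟨⟨0, hN⟩⟩
  have hX : ∀ i ω, 0 ≤ X i ω := fun i ω => (hpos i ω).le
  change Tendsto (fun ρ => log (μ.real (outageEvent X r ρ)) / log ρ) atTop (𝓝 (-(N - r)))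
  refine tendsto_order.2 ⟨fun c hc => ?_, fun c hc => ?_⟩
  · exact eventually_lt_log_measureReal_outageEvent_div_log hindep hident hX hnonzero hexp hr0
      (by simpa using hrN) (by simp only [Fintype.card_fin]; linarith)
  · exact eventually_log_measureReal_outageEvent_div_log_lt hindep hident hX hnonzero hexp hr0
      (by simp only [Fintype.card_fin]; linarith)

/-- Outage-exponent computation for a parallel fading channel with `N` i.i.d. fades: if
each positive fade `Xᵢ` has near-zero probability exponent 1, then for `0 < r < N`,
`log Pr[∑ᵢ log(1+ρXᵢ) ≤ r·log ρ] / log ρ → −(N − r)` as `ρ → ∞`. -/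
theorem parallel_channel_outage_exponent
    {Ω : Type*} [MeasurableSpace Ω] (μ : Measure Ω) [IsProbabilityMeasure μ]
    (N : ℕ) (hN : 1 ≤ N) (X : Fin N → Ω → ℝ)
    (hmeas : ∀ i, Measurable (X i))
    (hpos : ∀ i ω, 0 < X i ω)
    (hindep : iIndepFun X μ)
    (hident : ∀ i, IdentDistrib (X i) (X ⟨0, hN⟩) μ μ)
    (hnonzero : ∀ ε : ℝ, 0 < ε → 0 < (μ {ω | X ⟨0, hN⟩ ω ≤ ε}).toReal)
    (hexp : Tendsto (fun ε : ℝ => Real.log ((μ {ω | X ⟨0, hN⟩ ω ≤ ε}).toReal) / Real.log ε)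
      (nhdsWithin 0 (Set.Ioi 0)) (nhds 1))
    (r : ℝ) (hr0 : 0 < r) (hrN : r < N) :
    Tendsto (fun ρ : ℝ =>
        Real.log ((μ {ω | ∑ i, Real.log (1 + ρ * X i ω) ≤ r * Real.log ρ}).toReal)
          / Real.log ρ)
      atTop (nhds (-((N : ℝ) - r))) :=
  parallel_channel_outage_exponent_general μ N hN X hpos hindep hident hnonzero hexp r hr0 hrN
end
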